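/- Iterated DIT FFT factorization: for α = (n_K,…,n_0) and N = ∏_{k=0}^K n_k, the DFT matrix factors as F_N = (∏_{k=0}^K D_{k,α}) S_α, where D_{k,α} = A_k^{-1} (I_{N/n_k} ⊗ F_{n_k}) Ŵ_k A_k, with A_k = I_{N/N_k} ⊗ L^{N_k}_{n_k}, Ŵ_k = I_{N/N_k} ⊗ W^{N_k}_{n_k}, N_k = ∏_{j=0}^k n_j, and the product over k taken with D_{K,α} leftmost. -/

import Mathlib

open Matrix Complex

/-- The primitive `n`-th root of unity `ω_n = exp(-2πi/n)`. -/
noncomputable def tw (n : ℕ) : ℂ := Complex.exp (-(2 * Real.pi * Complex.I) / n)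

/-- The `n × n` DFT matrix `F_n = [ω_n^{kl}]`. -/
noncomputable def DFT (n : ℕ) : Matrix (Fin n) (Fin n) ℂ :=
  fun r c => tw n ^ (r.val * c.val)

/-- The stride permutation `L^n_k` (with `n = k*m`), sending the basis vector
`e_{i,k} ⊗ e_{j,m}` (flat index `i*m+j`) to `e_{j,m} ⊗ e_{i,k}` (flat index `j*k+i`). -/
noncomputable def Lmat (n k m : ℕ) : Matrix (Fin n) (Fin n) ℂ :=
  fun r c => if r.val = (c.val % m) * k + c.val / m then 1 else 0

/-- The diagonal twiddle matrix `W^n_m` (with `n = k*m`), acting on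
`e_{i,k} ⊗ e_{j,m}` (flat index `c = i*m+j`) by the scalar `ω_n^{ij}`. -/
noncomputable def Wmat (n m : ℕ) : Matrix (Fin n) (Fin n) ℂ :=
  fun r c => if r = c then tw n ^ ((c.val / m) * (c.val % m)) else 0

/-- Entry of a `k × k` matrix at natural-number indices (0 outside range). -/
noncomputable def ment {k : ℕ} (A : Matrix (Fin k) (Fin k) ℂ) (i j : ℕ) : ℂ :=
  if h : i < k ∧ j < k then A ⟨i, h.1⟩ ⟨j, h.2⟩ else 0

/-- Kronecker product `A ⊗ B` of a `k×k` and an `m×m` matrix, written on flat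
indices of size `n = k*m` (row-major: index `i*m+j ↔ e_{i,k} ⊗ e_{j,m}`). -/
noncomputable def kron (n k m : ℕ) (A : Matrix (Fin k) (Fin k) ℂ)
    (B : Matrix (Fin m) (Fin m) ℂ) : Matrix (Fin n) (Fin n) ℂ :=
  fun r c => ment A (r.val / m) (c.val / m) * ment B (r.val % m) (c.val % m)

/-- Value of a digit list `[d_0, d_1, …]` in the mixed-radix system with radices
`[c_0, c_1, …]` (least-significant first): `d_0 + c_0*(d_1 + c_1*(…))`. -/
def mval : List ℕ → List ℕ → ℕ
  | c :: cs, d :: ds => d + c * mval cs ds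
  | _, _ => 0

/-- Digits (least-significant first) of `x` in the mixed-radix system with
radices `[c_0, c_1, …]` (least-significant first). -/
def mdig : List ℕ → ℕ → List ℕ
  | [], _ => []
  | c :: cs, x => x % c :: mdig cs (x / c)

/-- The digit-reversal permutation `P_α` of a multi-index `α = (n_K, …, n_0)`,
where `a = [n_0, …, n_K]` lists the radices of the system generated by `α`
least-significant first: `x` is decomposed in the system generated by
`α* = (n_0, …, n_K)` and re-read with reversed digits in the system of `α`. -/
def mrev (a : List ℕ) (x : ℕ) : ℕ := mval a ((mdig a.reverse x).reverse)

/-- The digit-reversal permutation matrix `S_α`, `S_α e_x = e_{P_α x}`;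
`a = [n_0, …, n_K]` lists `α = (n_K, …, n_0)` least-significant first. -/
noncomputable def Smat (n : ℕ) (a : List ℕ) : Matrix (Fin n) (Fin n) ℂ :=
  fun r c => if r.val = mrev a c.val then 1 else 0

/-- The diagonal matrix `V_{k,m,n}` of size `N = k*m*n`, acting on
`e_{i,k} ⊗ e_{j,m} ⊗ e_{ℓ,n}` (flat index `i*(m*n) + j*n + ℓ`) by
`ω_{kmn}^{i(ℓ m + j)}`. -/
noncomputable def Vmat (N k m n : ℕ) : Matrix (Fin N) (Fin N) ℂ :=
  fun r c => if r = c then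
    tw (k * m * n) ^ ((c.val / (m * n)) * ((c.val % n) * m + (c.val / n) % m)) else 0

/-! Induct on the radix list, splitting off the most significant radix `n = n_K`, so that
`N = P * n` with `P = n_0 ⋯ n_{K-1}`. Each factor `D_{k,α}` with `k < K` only involves
`N_k ∣ P` and equals `I_n ⊗ D_{k,α'}` for the shorter multi-index `α'`, and the digit reversal
splits as `S_α = (I_n ⊗ S_{α'}) L^N_P`. By induction the lower factors and `S_α` combine into
`(I_n ⊗ F_P) L^N_P`. Since `L^N_n (I_n ⊗ F_P) = (F_P ⊗ I_n) L^N_n`, the top factor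
`D_{K,α} = (L^N_n)⁻¹ (I_P ⊗ F_n) W^N_n L^N_n` completes this to the Cooley–Tukey splitting
`F_N = L^N_P (I_P ⊗ F_n) W^N_n (F_P ⊗ I_n)`. -/

open scoped Kronecker

lemma tw_pow_self {n : ℕ} (hn : 0 < n) : tw n ^ n = 1 := by
  rw [tw, ← Complex.exp_nat_mul, mul_div_cancel₀ _ (by exact_mod_cast hn.ne'), Complex.exp_neg,
    Complex.exp_two_pi_mul_I, inv_one]

lemma tw_mul_pow_right {m n : ℕ} (hn : 0 < n) : tw (m * n) ^ n = tw m := by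
  have hn' : (n : ℂ) ≠ 0 := by exact_mod_cast hn.ne'
  rw [tw, tw, ← Complex.exp_nat_mul]
  congr 1
  push_cast
  field_simp

lemma tw_pow_cooleyTukey {k m : ℕ} (hk : 0 < k) (hm : 0 < m) (i₁ i₂ j₁ j₂ : ℕ) :
    tw (k * m) ^ ((i₁ + k * j₁) * (j₂ + m * i₂)) =
      tw m ^ (j₁ * j₂) * (tw (k * m) ^ (i₁ * j₂) * tw k ^ (i₁ * i₂)) := by
  have hsplit : (i₁ + k * j₁) * (j₂ + m * i₂) =
      k * (j₁ * j₂) + i₁ * j₂ + m * (i₁ * i₂) + k * m * (j₁ * i₂) := by ring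
  rw [hsplit, pow_add, pow_mul _ (k * m), tw_pow_self (Nat.mul_pos hk hm), one_pow, mul_one,
    pow_add, pow_add, pow_mul, pow_mul _ m, tw_mul_pow_right hm, mul_comm k m,
    tw_mul_pow_right hk]
  ring

def flatEquiv {p q n : ℕ} (h : p * q = n) : Fin p × Fin q ≃ Fin n :=
  finProdFinEquiv.trans (finCongr h)

@[simp]
lemma val_flatEquiv {p q n : ℕ} (h : p * q = n) (x : Fin p × Fin q) :
    (flatEquiv h x : ℕ) = x.2 + q * x.1 := rfl

@[simp]
lemma val_flatEquiv_symm_fst {p q n : ℕ} (h : p * q = n) (r : Fin n) :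
    (((flatEquiv h).symm r).1 : ℕ) = r / q := rfl

@[simp]
lemma val_flatEquiv_symm_snd {p q n : ℕ} (h : p * q = n) (r : Fin n) :
    (((flatEquiv h).symm r).2 : ℕ) = r % q := rfl

@[simp]
lemma val_flatEquiv_div {p q n : ℕ} (h : p * q = n) (x : Fin p × Fin q) :
    (flatEquiv h x : ℕ) / q = x.1 := by
  rw [← val_flatEquiv_symm_fst h, Equiv.symm_apply_apply]

@[simp]
lemma val_flatEquiv_mod {p q n : ℕ} (h : p * q = n) (x : Fin p × Fin q) :
    (flatEquiv h x : ℕ) % q = x.2 := by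
  rw [← val_flatEquiv_symm_snd h, Equiv.symm_apply_apply]

lemma kron_eq_submatrix {p q n : ℕ} (h : p * q = n) (A : Matrix (Fin p) (Fin p) ℂ)
    (B : Matrix (Fin q) (Fin q) ℂ) :
    kron n p q A B = (A ⊗ₖ B).submatrix (flatEquiv h).symm (flatEquiv h).symm := by
  ext r c
  have hr : (r : ℕ) / q < p := ((flatEquiv h).symm r).1.isLt
  have hc : (c : ℕ) / q < p := ((flatEquiv h).symm c).1.isLt
  have hr' : (r : ℕ) % q < q := ((flatEquiv h).symm r).2.isLt
  have hc' : (c : ℕ) % q < q := ((flatEquiv h).symm c).2.isLt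
  simp only [kron, ment, dif_pos (And.intro hr hc), dif_pos (And.intro hr' hc')]
  rfl

lemma kron_flatEquiv {p q n : ℕ} (h : p * q = n) (A : Matrix (Fin p) (Fin p) ℂ)
    (B : Matrix (Fin q) (Fin q) ℂ) (x y : Fin p × Fin q) :
    kron n p q A B (flatEquiv h x) (flatEquiv h y) = A x.1 y.1 * B x.2 y.2 := by
  simp [kron_eq_submatrix h]

lemma kron_one_one {p q n : ℕ} (h : p * q = n) :
    kron n p q (1 : Matrix (Fin p) (Fin p) ℂ) 1 = 1 := by
  rw [kron_eq_submatrix h, one_kronecker_one, submatrix_one_equiv]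

lemma one_flatEquiv {p q n : ℕ} (h : p * q = n) (x y : Fin p × Fin q) :
    (1 : Matrix (Fin n) (Fin n) ℂ) (flatEquiv h x) (flatEquiv h y) =
      (1 : Matrix (Fin p) (Fin p) ℂ) x.1 y.1 * (1 : Matrix (Fin q) (Fin q) ℂ) x.2 y.2 := by
  rw [← kron_one_one h, kron_flatEquiv]

lemma kron_mul_kron {p q n : ℕ} (h : p * q = n) (A A' : Matrix (Fin p) (Fin p) ℂ)
    (B B' : Matrix (Fin q) (Fin q) ℂ) :
    kron n p q A B * kron n p q A' B' = kron n p q (A * A') (B * B') := by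
  simp only [kron_eq_submatrix h, submatrix_mul_equiv, mul_kronecker_mul]

lemma inv_kron {p q n : ℕ} (h : p * q = n) (A : Matrix (Fin p) (Fin p) ℂ)
    (B : Matrix (Fin q) (Fin q) ℂ) :
    (kron n p q A B)⁻¹ = kron n p q A⁻¹ B⁻¹ := by
  rw [kron_eq_submatrix h, kron_eq_submatrix h, inv_submatrix_equiv, inv_kronecker]

lemma list_prod_map_kron_one {p q n : ℕ} (h : p * q = n) {α : Type*} (l : List α)
    (f : α → Matrix (Fin q) (Fin q) ℂ) :
    (l.map fun x => kron n p q 1 (f x)).prod = kron n p q 1 (l.map f).prod := by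
  induction l with
  | nil => exact (kron_one_one h).symm
  | cons x l ih =>
    rw [List.map_cons, List.map_cons, List.prod_cons, List.prod_cons, ih, kron_mul_kron h, one_mul]

lemma kron_one_left {n : ℕ} (B : Matrix (Fin n) (Fin n) ℂ) : kron n 1 n 1 B = B := by
  ext r c
  simp [kron, ment, one_apply, Nat.div_eq_of_lt, Nat.mod_eq_of_lt]

lemma kron_one_assoc {n t d P N : ℕ} (hP : t * d = P) (hN : n * P = N)
    (X : Matrix (Fin d) (Fin d) ℂ) :
    kron N (n * t) d 1 X = kron N n P 1 (kron P t d 1 X) := by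
  have hN' : n * t * d = N := by rw [mul_assoc, hP, hN]
  ext r c
  obtain ⟨⟨u, v⟩, rfl⟩ := (flatEquiv hN).surjective r
  obtain ⟨⟨u', v'⟩, rfl⟩ := (flatEquiv hN).surjective c
  obtain ⟨⟨v₁, v₂⟩, rfl⟩ := (flatEquiv hP).surjective v
  obtain ⟨⟨v₁', v₂'⟩, rfl⟩ := (flatEquiv hP).surjective v'
  have key : ∀ a b, flatEquiv hN (a, flatEquiv hP b) =
      flatEquiv hN' (flatEquiv (rfl : n * t = n * t) (a, b.1), b.2) := by
    intro a b; ext; simp only [val_flatEquiv, ← hP]; ring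
  rw [kron_flatEquiv hN, kron_flatEquiv hP, key, key, kron_flatEquiv hN', one_flatEquiv rfl,
    mul_assoc]

def strideEquiv {k m n : ℕ} (h : k * m = n) : Equiv.Perm (Fin n) :=
  (flatEquiv h).symm.trans ((Equiv.prodComm _ _).trans (flatEquiv ((mul_comm m k).trans h)))

@[simp]
lemma strideEquiv_flatEquiv {k m n : ℕ} (h : k * m = n) (h' : m * k = n) (x : Fin k × Fin m) :
    strideEquiv h (flatEquiv h x) = flatEquiv h' x.swap := by
  simp [strideEquiv]

@[simp]
lemma strideEquiv_symm_flatEquiv {k m n : ℕ} (h : k * m = n) (h' : m * k = n)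
    (x : Fin m × Fin k) :
    (strideEquiv h).symm (flatEquiv h' x) = flatEquiv h x.swap := by
  rw [Equiv.symm_apply_eq, strideEquiv_flatEquiv h h', Prod.swap_swap]

lemma Lmat_eq_submatrix {k m n : ℕ} (h : k * m = n) :
    Lmat n k m = (1 : Matrix (Fin n) (Fin n) ℂ).submatrix id (strideEquiv h) := by
  ext r c
  obtain ⟨x, rfl⟩ := (flatEquiv h).surjective c
  simp only [Lmat, submatrix_apply, id, strideEquiv_flatEquiv h ((mul_comm m k).trans h),
    one_apply, Fin.ext_iff, val_flatEquiv_div, val_flatEquiv_mod]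
  rw [val_flatEquiv, Prod.fst_swap, Prod.snd_swap, add_comm, mul_comm]

lemma Lmat_mul {k m n : ℕ} (h : k * m = n) (M : Matrix (Fin n) (Fin n) ℂ) :
    Lmat n k m * M = M.submatrix (strideEquiv h).symm id := by
  rw [Lmat_eq_submatrix h, one_submatrix_mul]
  rfl

lemma mul_Lmat {k m n : ℕ} (h : k * m = n) (M : Matrix (Fin n) (Fin n) ℂ) :
    M * Lmat n k m = M.submatrix id (strideEquiv h) := by
  rw [Lmat_eq_submatrix h]
  exact mul_submatrix_one (Equiv.refl _) _ M

lemma Lmat_mul_Lmat {k m n : ℕ} (h : k * m = n) (h' : m * k = n) :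
    Lmat n k m * Lmat n m k = 1 := by
  have hsymm : (strideEquiv h').symm = strideEquiv h := by
    ext1 x
    obtain ⟨y, rfl⟩ := (flatEquiv h).surjective x
    rw [strideEquiv_symm_flatEquiv h' h, strideEquiv_flatEquiv h h']
  rw [Lmat_mul h, Lmat_eq_submatrix h', submatrix_submatrix, ← hsymm]
  exact submatrix_one_equiv _

lemma Lmat_mul_kron_one {k m n : ℕ} (h : k * m = n) (h' : m * k = n)
    (X : Matrix (Fin m) (Fin m) ℂ) :
    Lmat n k m * kron n k m 1 X = kron n m k X 1 * Lmat n k m := by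
  rw [Lmat_mul h, mul_Lmat h]
  ext r c
  obtain ⟨x, rfl⟩ := (flatEquiv h').surjective r
  obtain ⟨y, rfl⟩ := (flatEquiv h).surjective c
  simp only [submatrix_apply, id, strideEquiv_symm_flatEquiv h h', strideEquiv_flatEquiv h h',
    kron_flatEquiv]
  exact mul_comm _ _

lemma Wmat_eq_diagonal (n m : ℕ) :
    Wmat n m = diagonal fun c : Fin n => tw n ^ (c / m * (c % m) : ℕ) := by
  ext r c
  by_cases hrc : r = c <;> simp [Wmat, hrc]

lemma DFT_eq_cooleyTukey {k m n : ℕ} (hk : 0 < k) (hm : 0 < m) (h : k * m = n) :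
    DFT n = Lmat n k m * kron n k m 1 (DFT m) * Wmat n m * kron n k m (DFT k) 1 := by
  have h' : m * k = n := (mul_comm m k).trans h
  rw [Matrix.mul_assoc, Matrix.mul_assoc, Lmat_mul h, Wmat_eq_diagonal]
  ext r c
  obtain ⟨⟨j₁, i₁⟩, rfl⟩ := (flatEquiv h').surjective r
  obtain ⟨⟨i₂, j₂⟩, rfl⟩ := (flatEquiv h).surjective c
  subst h
  rw [submatrix_apply, mul_apply]
  simp only [id, strideEquiv_symm_flatEquiv rfl h', diagonal_mul, ← (flatEquiv rfl).sum_comp,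
    Fintype.sum_prod_type, kron_flatEquiv, val_flatEquiv_div, val_flatEquiv_mod, one_apply,
    Prod.swap_prod_mk, DFT]
  simp [tw_pow_cooleyTukey hk hm]

lemma length_mdig (l : List ℕ) (x : ℕ) : (mdig l x).length = l.length := by
  induction l generalizing x with
  | nil => rfl
  | cons c l ih => simp [mdig, ih]

lemma mval_append_singleton (a ds : List ℕ) (hds : ds.length = a.length) (n d : ℕ) :
    mval (a ++ [n]) (ds ++ [d]) = mval a ds + a.prod * d := by
  induction a generalizing ds with
  | nil => simp_all [mval]
  | cons c a ih =>
    obtain _ | ⟨d₀, ds⟩ := ds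
    · simp at hds
    · simp only [List.cons_append, mval, List.prod_cons]
      rw [ih ds (by simpa using hds)]
      ring

lemma mrev_append_singleton (a : List ℕ) (n x : ℕ) :
    mrev (a ++ [n]) x = mrev a (x / n) + a.prod * (x % n) := by
  rw [mrev, List.reverse_append, List.reverse_singleton, List.singleton_append, mdig,
    List.reverse_cons, mval_append_singleton _ _ (by simp [length_mdig]), mrev]

lemma mrev_lt_prod (a : List ℕ) (ha : ∀ c ∈ a, 0 < c) (x : ℕ) : mrev a x < a.prod := by
  induction a using List.reverseRecOn generalizing x with
  | nil => simp [mrev, mval]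
  | append_singleton a n ih =>
    have hn : 0 < n := ha n (by simp)
    have hlt := ih (fun c hc => ha c (by simp [hc])) (x / n)
    have hmod : x % n + 1 ≤ n := Nat.mod_lt x hn
    rw [mrev_append_singleton, List.prod_append, List.prod_singleton]
    calc mrev a (x / n) + a.prod * (x % n) < a.prod * (x % n + 1) := by rw [mul_add_one]; omega
      _ ≤ a.prod * n := Nat.mul_le_mul_left _ hmod

lemma Smat_nil : Smat 1 [] = 1 := by
  ext r c
  rw [Subsingleton.elim r 0, Subsingleton.elim c 0]
  simp [Smat, mrev, mval]

lemma Smat_append_singleton {a : List ℕ} (ha : ∀ c ∈ a, 0 < c) {n P N : ℕ} (hP : a.prod = P)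
    (hN : P * n = N) : Smat N (a ++ [n]) = kron N n P 1 (Smat P a) * Lmat N P n := by
  subst hP
  have hN' : n * a.prod = N := (mul_comm _ _).trans hN
  rw [mul_Lmat hN]
  ext r c
  obtain ⟨⟨v', u'⟩, rfl⟩ := (flatEquiv hN').surjective r
  obtain ⟨⟨u, v⟩, rfl⟩ := (flatEquiv hN).surjective c
  have hmrev : mrev (a ++ [n]) (flatEquiv hN (u, v)) =
      flatEquiv hN' (v, ⟨mrev a u, mrev_lt_prod a ha u⟩) := by
    rw [mrev_append_singleton, val_flatEquiv_div, val_flatEquiv_mod, val_flatEquiv, add_comm]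
  simp only [Smat, hmrev, Fin.val_inj, (flatEquiv hN').injective.eq_iff, submatrix_apply, id,
    strideEquiv_flatEquiv hN hN', Prod.swap_prod_mk, kron_flatEquiv, one_apply, Prod.mk.injEq]
  simp only [Fin.ext_iff, ite_zero_mul_ite_zero, mul_one]

lemma kron_one_div_assoc {d P n N : ℕ} (hd : 0 < d) (hdP : d ∣ P) (hN : n * P = N)
    (X : Matrix (Fin d) (Fin d) ℂ) :
    kron N (N / d) d 1 X = kron N n P 1 (kron P (P / d) d 1 X) := by
  have hPd : P / d * d = P := Nat.div_mul_cancel hdP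
  have hNd : N / d = n * (P / d) := by
    rw [← hN, ← hPd, ← mul_assoc, Nat.mul_div_cancel _ hd, hPd]
  rw [hNd]
  exact kron_one_assoc hPd hN X

/-- The factor `D_{k,α}` of the statement, with `nk = n_k` and `Nk = N_k`. -/
noncomputable def ditFactor (N nk Nk : ℕ) : Matrix (Fin N) (Fin N) ℂ :=
  (kron N (N / Nk) Nk 1 (Lmat Nk nk (Nk / nk)))⁻¹ * kron N (N / nk) nk 1 (DFT nk) *
    kron N (N / Nk) Nk 1 (Wmat Nk nk) * kron N (N / Nk) Nk 1 (Lmat Nk nk (Nk / nk))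

lemma ditFactor_eq_kron_one {nk Nk P n N : ℕ} (hnk : 0 < nk) (hNk : 0 < Nk) (hnkNk : nk ∣ Nk)
    (hNkP : Nk ∣ P) (hN : n * P = N) :
    ditFactor N nk Nk = kron N n P 1 (ditFactor P nk Nk) := by
  simp only [ditFactor, kron_one_div_assoc hNk hNkP hN,
    kron_one_div_assoc hnk (hnkNk.trans hNkP) hN, inv_kron hN, inv_one,
    kron_mul_kron hN, one_mul]

lemma ditFactor_self {n P N : ℕ} (hn : 0 < n) (hP : 0 < P) (hN : P * n = N) :
    ditFactor N n N = (Lmat N n P)⁻¹ * kron N P n 1 (DFT n) * Wmat N n * Lmat N n P := by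
  have hNN : N / N = 1 := Nat.div_self (hN ▸ Nat.mul_pos hP hn)
  have hNn : N / n = P := by rw [← hN, Nat.mul_div_cancel _ hn]
  rw [ditFactor, hNN, kron_one_left, kron_one_left, hNn]

lemma DFT_eq_ditStep {n P N : ℕ} (hn : 0 < n) (hP : 0 < P) (hN : P * n = N) :
    DFT N = (Lmat N n P)⁻¹ * kron N P n 1 (DFT n) * Wmat N n * Lmat N n P *
      (kron N n P 1 (DFT P) * Lmat N P n) := by
  have hN' : n * P = N := (mul_comm n P).trans hN
  have hinv : (Lmat N n P)⁻¹ = Lmat N P n := inv_eq_right_inv (Lmat_mul_Lmat hN' hN)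
  calc DFT N = Lmat N P n * kron N P n 1 (DFT n) * Wmat N n * kron N P n (DFT P) 1 *
        (Lmat N n P * Lmat N P n) := by
        rw [Lmat_mul_Lmat hN' hN, Matrix.mul_one, DFT_eq_cooleyTukey hP hn hN]
    _ = _ := by
        rw [hinv, Matrix.mul_assoc _ (Lmat N n P), ← Matrix.mul_assoc (Lmat N n P),
          Lmat_mul_kron_one hN' hN]
        simp only [Matrix.mul_assoc]

lemma getD_dvd_prod_take {l : List ℕ} {k : ℕ} (hk : k < l.length) :
    l.getD k 1 ∣ (l.take (k + 1)).prod := by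
  rw [List.getD_eq_getElem _ _ hk, List.prod_take_succ _ _ hk]
  exact dvd_mul_left _ _

lemma DFT_one : DFT 1 = 1 := by
  ext r c
  rw [Subsingleton.elim r 0, Subsingleton.elim c 0]
  simp [DFT]

theorem DFT_eq_prod_ditFactor_mul_Smat (a : List ℕ) (ha : ∀ x ∈ a, 0 < x) :
    DFT a.prod = ((List.range a.length).reverse.map fun k =>
      ditFactor a.prod (a.getD k 1) (a.take (k + 1)).prod).prod * Smat a.prod a := by
  induction a using List.reverseRecOn with
  | nil =>
    exact DFT_one.trans (Smat_nil.symm.trans (Matrix.one_mul _).symm)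
  | append_singleton l n ih =>
    have hn : 0 < n := ha n (by simp)
    have hl : ∀ x ∈ l, 0 < x := fun x hx => ha x (by simp [hx])
    have hP : 0 < l.prod := List.prod_pos hl
    have hN : l.prod * n = (l ++ [n]).prod := by simp
    have hN' : n * l.prod = (l ++ [n]).prod := by rw [mul_comm, hN]
    have hlift : ∀ k ∈ (List.range l.length).reverse,
        ditFactor (l ++ [n]).prod ((l ++ [n]).getD k 1) ((l ++ [n]).take (k + 1)).prod =
          kron _ n l.prod 1 (ditFactor l.prod (l.getD k 1) (l.take (k + 1)).prod) := by
      intro k hk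
      have hk : k < l.length := by simpa using hk
      rw [List.getD_append _ _ _ _ hk, List.take_append_of_le_length hk]
      exact ditFactor_eq_kron_one (by rw [List.getD_eq_getElem _ _ hk]; exact hl _ (by simp))
        (List.prod_pos fun x hx => hl x (List.mem_of_mem_take hx)) (getD_dvd_prod_take hk)
        ((List.take_sublist _ _).prod_dvd_prod) hN'
    rw [List.length_append, List.length_singleton, List.range_succ, List.reverse_append,
      List.reverse_singleton, List.singleton_append, List.map_cons, List.prod_cons,
      List.map_congr_left hlift, list_prod_map_kron_one hN',
      List.getD_append_right _ _ _ _ le_rfl, Nat.sub_self, List.getD_cons_zero,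
      List.take_of_length_le (by simp), ditFactor_self hn hP hN, Smat_append_singleton hl rfl hN,
      Matrix.mul_assoc, ← Matrix.mul_assoc (kron _ n l.prod 1 _), kron_mul_kron hN', one_mul,
      ← ih hl]
    exact DFT_eq_ditStep hn hP hN

theorem fft_dit_general (a : List ℕ) (ha : ∀ x ∈ a, 0 < x)
    (N : ℕ) (hN : N = a.prod) :
    DFT N =
      (((List.range a.length).reverse.map (fun k =>
        let nk := a.getD k 1
        let Nk := (a.take (k + 1)).prod
        let A := kron N (N / Nk) Nk 1 (Lmat Nk nk (Nk / nk))
        let W := kron N (N / Nk) Nk 1 (Wmat Nk nk)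
        A⁻¹ * kron N (N / nk) nk 1 (DFT nk) * W * A)).prod) *
      Smat N a := by
  subst hN
  exact DFT_eq_prod_ditFactor_mul_Smat a ha

/-- iterated DIT FFT factorization. For `α = (n_K,…,n_0)`
(least-significant-first radix list `a = [n_0,…,n_K]`) and `N = ∏ n_k`,
`F_N = (∏_{k=0}^K D_{k,α}) S_α` with `D_{K,α}` leftmost, where
`D_{k,α} = A_k⁻¹ (I_{N/n_k} ⊗ F_{n_k}) Ŵ_k A_k`,
`A_k = I_{N/N_k} ⊗ L^{N_k}_{n_k}`, `Ŵ_k = I_{N/N_k} ⊗ W^{N_k}_{n_k}`,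
`N_k = ∏_{j=0}^k n_j`. -/
theorem fft_dit (a : List ℕ) (hne : a ≠ []) (ha : ∀ x ∈ a, 0 < x)
    (N : ℕ) (hN : N = a.prod) :
    DFT N =
      (((List.range a.length).reverse.map (fun k =>
        let nk := a.getD k 1
        let Nk := (a.take (k + 1)).prod
        let A := kron N (N / Nk) Nk 1 (Lmat Nk nk (Nk / nk))
        let W := kron N (N / Nk) Nk 1 (Wmat Nk nk)
        A⁻¹ * kron N (N / nk) nk 1 (DFT nk) * W * A)).prod) *
      Smat N a :=
  fft_dit_general a ha N hN
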